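/- Let A be a Banach algebra, B a Banach A-bimodule, and D : A → B* a continuous derivation. If the second transpose D'' : A** → B*** is a derivation (with A** carrying the first Arens product and B*** the Arens-extended module actions) and B* ⊆ D''(A**), then Z^ℓ_{A**}(B**) = B**. -/

import Mathlib

/-!
Common definitions: duals, biduals, Arens products, module actions,
derivations, first cohomology-vanishing predicates, weak-star continuity.
-/

noncomputable section

open ContinuousLinearMap Filter Topology Function

namespace ArensPaper

variable (𝕜 : Type) [RCLike 𝕜]

/-- The (topological) dual of a normed space. -/
abbrev Du (X : Type) [NormedAddCommGroup X] [NormedSpace 𝕜 X] : Type :=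
  StrongDual 𝕜 X

/-- The bidual of a normed space. -/
abbrev Bi (X : Type) [NormedAddCommGroup X] [NormedSpace 𝕜 X] : Type :=
  Du 𝕜 (Du 𝕜 X)

/-- Canonical embedding of a normed space into its bidual. -/
abbrev inDu (X : Type) [NormedAddCommGroup X] [NormedSpace 𝕜 X] : X →L[𝕜] Bi 𝕜 X :=
  NormedSpace.inclusionInDoubleDual 𝕜 X

variable {X Y Z : Type} [NormedAddCommGroup X] [NormedSpace 𝕜 X]
  [NormedAddCommGroup Y] [NormedSpace 𝕜 Y] [NormedAddCommGroup Z] [NormedSpace 𝕜 Z]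

/-- The transpose (Banach-space adjoint) of a continuous linear map. -/
def tr (T : X →L[𝕜] Y) : Du 𝕜 Y →L[𝕜] Du 𝕜 X :=
  (compL 𝕜 X Y 𝕜).flip T

/-- The second transpose of a continuous linear map. -/
def bitr (T : X →L[𝕜] Y) : Bi 𝕜 X →L[𝕜] Bi 𝕜 Y :=
  tr 𝕜 (tr 𝕜 T)

/-- The adjoint of a continuous bilinear map `m : X × Y → Z`:
`⟨adj m z' x, y⟩ = ⟨z', m x y⟩`. -/
def adj (m : X →L[𝕜] Y →L[𝕜] Z) : Du 𝕜 Z →L[𝕜] X →L[𝕜] Du 𝕜 Y :=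
  ((compL 𝕜 X (Y →L[𝕜] Z) (Du 𝕜 Y)).flip m).comp (compL 𝕜 Y Z 𝕜)

/-- The first Arens (triple adjoint) extension of a continuous bilinear map
to the biduals: `⟨ar1 m F G, z'⟩ = ⟨F, fun x => ⟨G, fun y => ⟨z', m x y⟩⟩⟩`. -/
def ar1 (m : X →L[𝕜] Y →L[𝕜] Z) : Bi 𝕜 X →L[𝕜] Bi 𝕜 Y →L[𝕜] Bi 𝕜 Z :=
  adj 𝕜 (adj 𝕜 (adj 𝕜 m))

/-- The second Arens extension of a continuous bilinear map. -/
def ar2 (m : X →L[𝕜] Y →L[𝕜] Z) : Bi 𝕜 X →L[𝕜] Bi 𝕜 Y →L[𝕜] Bi 𝕜 Z :=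
  (ar1 𝕜 m.flip).flip

/-- A continuous bilinear map is Arens regular if its two Arens extensions agree. -/
def ArensRegularBil (m : X →L[𝕜] Y →L[𝕜] Z) : Prop :=
  ar1 𝕜 m = ar2 𝕜 m

/-- A map between dual spaces is weak*-weak*-continuous. -/
def WStarCont (f : Du 𝕜 X → Du 𝕜 Y) : Prop :=
  Continuous fun x : WeakDual 𝕜 X => (show WeakDual 𝕜 Y from f (show Du 𝕜 X from x))

/-- A map from a dual space to a normed space is weak*-weak-continuous. -/
def WStarWeakCont {B : Type} [NormedAddCommGroup B] [NormedSpace 𝕜 B]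
    (f : Du 𝕜 X → B) : Prop :=
  Continuous fun x : WeakDual 𝕜 X => (show WeakSpace 𝕜 B from f (show Du 𝕜 X from x))

/-- `D` is a derivation with respect to a product `p` on `C` and module actions
`l`, `r` of `C` on `E`. -/
def IsDer {C E : Type} [NormedAddCommGroup C] [NormedSpace 𝕜 C]
    [NormedAddCommGroup E] [NormedSpace 𝕜 E]
    (p : C → C → C) (l : C → E → E) (r : E → C → E) (D : C →L[𝕜] E) : Prop :=
  ∀ a b : C, D (p a b) = l a (D b) + r (D a) b

/-- `D` is an inner derivation for the module actions `l`, `r`. -/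
def IsInner {C E : Type} [NormedAddCommGroup C] [NormedSpace 𝕜 C]
    [NormedAddCommGroup E] [NormedSpace 𝕜 E]
    (l : C → E → E) (r : E → C → E) (D : C →L[𝕜] E) : Prop :=
  ∃ x : E, ∀ a : C, D a = l a x - r x a

/-- A Banach algebra has a left bounded approximate identity. -/
def HasLBAI (A : Type) [NonUnitalNormedRing A] : Prop :=
  ∃ (ι : Type) (L : Filter ι) (e : ι → A), L.NeBot ∧ (∃ c : ℝ, ∀ i, ‖e i‖ ≤ c) ∧
    ∀ a : A, Tendsto (fun i => e i * a) L (𝓝 a)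

/-- A Banach bimodule structure on `E` over the "Banach algebra" `(C, p)`. -/
structure BimodStr {C : Type} [NormedAddCommGroup C] [NormedSpace 𝕜 C]
    (p : C →L[𝕜] C →L[𝕜] C) (E : Type) [NormedAddCommGroup E] [NormedSpace 𝕜 E] :
    Type where
  l : C →L[𝕜] E →L[𝕜] E
  r : E →L[𝕜] C →L[𝕜] E
  l_mul : ∀ a b x, l (p a b) x = l a (l b x)
  r_mul : ∀ x a b, r (r x a) b = r x (p a b)
  lr : ∀ a x b, r (l a x) b = l a (r x b)

/-- A bundled Banach bimodule over the "Banach algebra" `(C, p)`. -/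
structure BBimod {C : Type} [NormedAddCommGroup C] [NormedSpace 𝕜 C]
    (p : C →L[𝕜] C →L[𝕜] C) : Type 1 where
  E : Type
  [grp : NormedAddCommGroup E]
  [mod : NormedSpace 𝕜 E]
  [cpl : CompleteSpace E]
  str : BimodStr 𝕜 p E

attribute [instance] BBimod.grp BBimod.mod BBimod.cpl

/-- Amenability of the "Banach algebra" `(C, p)`: every continuous derivation into the
dual of any Banach bimodule is inner. -/
def IsAmenableP {C : Type} [NormedAddCommGroup C] [NormedSpace 𝕜 C]
    (p : C →L[𝕜] C →L[𝕜] C) : Prop :=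
  ∀ (M : BBimod 𝕜 p) (D : C →L[𝕜] Du 𝕜 M.E),
    IsDer 𝕜 (fun a b => p a b)
      (fun a f => f.comp (M.str.r.flip a)) (fun f a => f.comp (M.str.l a)) D →
    IsInner 𝕜 (fun a f => f.comp (M.str.r.flip a)) (fun f a => f.comp (M.str.l a)) D

/-- Weak amenability of a Banach algebra: every continuous derivation into the dual
(with the dual actions of the regular bimodule) is inner. -/
def WeaklyAmenable (A : Type) [NonUnitalNormedRing A] [NormedSpace 𝕜 A]
    [IsScalarTower 𝕜 A A] [SMulCommClass 𝕜 A A] : Prop :=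
  ∀ D : A →L[𝕜] Du 𝕜 A,
    IsDer 𝕜 (fun a b => a * b)
      (fun a f => f.comp ((ContinuousLinearMap.mul 𝕜 A).flip a))
      (fun f a => f.comp (ContinuousLinearMap.mul 𝕜 A a)) D →
    IsInner 𝕜 (fun a f => f.comp ((ContinuousLinearMap.mul 𝕜 A).flip a))
      (fun f a => f.comp (ContinuousLinearMap.mul 𝕜 A a)) D

/-- The embedding of the predual `X` into the dual `A*`, given an identification
`j : A ≃ X*`. -/
def predualEmbed {A X : Type} [NormedAddCommGroup A] [NormedSpace 𝕜 A]
    [NormedAddCommGroup X] [NormedSpace 𝕜 X] (j : A ≃ₗᵢ[𝕜] Du 𝕜 X) (x : X) : Du 𝕜 A :=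
  (inDu 𝕜 X x).comp j.toLinearIsometry.toContinuousLinearMap

/-- `j : A ≃ X*` makes `A` a dual Banach algebra: the image of `X` in `A*` is a
submodule of `A*` for the dual actions. -/
def IsDualBanachAlgebra {A X : Type} [NonUnitalNormedRing A] [NormedSpace 𝕜 A]
    [IsScalarTower 𝕜 A A] [SMulCommClass 𝕜 A A]
    [NormedAddCommGroup X] [NormedSpace 𝕜 X] (j : A ≃ₗᵢ[𝕜] Du 𝕜 X) : Prop :=
  ∀ (a : A) (x : X),
    ((predualEmbed 𝕜 j x).comp ((ContinuousLinearMap.mul 𝕜 A).flip a)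
        ∈ Set.range (predualEmbed 𝕜 j)) ∧
    ((predualEmbed 𝕜 j x).comp (ContinuousLinearMap.mul 𝕜 A a)
        ∈ Set.range (predualEmbed 𝕜 j))

/-- A normed space is weakly sequentially complete. -/
def WSCSpace (E : Type) [NormedAddCommGroup E] [NormedSpace 𝕜 E] : Prop :=
  ∀ f : ℕ → E,
    (∀ φ : Du 𝕜 E, ∃ L : 𝕜, Tendsto (fun n => φ (f n)) atTop (𝓝 L)) →
    ∃ e : E, ∀ φ : Du 𝕜 E, Tendsto (fun n => φ (f n)) atTop (𝓝 (φ e))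

/-- Left multiplication by `a ∈ A` restricted to an ideal `I`. -/
def mulLRes {A : Type} [NonUnitalNormedRing A] [NormedSpace 𝕜 A]
    [IsScalarTower 𝕜 A A] [SMulCommClass 𝕜 A A] (I : Submodule 𝕜 A) (a : A)
    (h : ∀ x : I, a * (x : A) ∈ I) : I →L[𝕜] I :=
  ((ContinuousLinearMap.mul 𝕜 A a).comp I.subtypeL).codRestrict I h

/-- Right multiplication by `a ∈ A` restricted to an ideal `I`. -/
def mulRRes {A : Type} [NonUnitalNormedRing A] [NormedSpace 𝕜 A]
    [IsScalarTower 𝕜 A A] [SMulCommClass 𝕜 A A] (I : Submodule 𝕜 A) (a : A)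
    (h : ∀ x : I, (x : A) * a ∈ I) : I →L[𝕜] I :=
  (((ContinuousLinearMap.mul 𝕜 A).flip a).comp I.subtypeL).codRestrict I h


/-- Connes-amenability of the bidual algebra `(A**, p)`: every weak*-weak*-continuous
derivation into a normal dual Banach bimodule is inner. -/
def ConnesAmenableBidual {A : Type} [NonUnitalNormedRing A] [NormedSpace 𝕜 A]
    [IsScalarTower 𝕜 A A] [SMulCommClass 𝕜 A A]
    (p : Bi 𝕜 A →L[𝕜] Bi 𝕜 A →L[𝕜] Bi 𝕜 A) : Prop :=
  ∀ (X : Type) [NormedAddCommGroup X] [NormedSpace 𝕜 X] [CompleteSpace X]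
    (M : BimodStr 𝕜 p (Du 𝕜 X)),
    (∀ f : Du 𝕜 X, WStarCont 𝕜 (fun m : Bi 𝕜 A => M.l m f) ∧
        WStarCont 𝕜 (fun m : Bi 𝕜 A => M.r f m)) →
    ∀ D : Bi 𝕜 A →L[𝕜] Du 𝕜 X,
      IsDer 𝕜 (fun m n => p m n) (fun m f => M.l m f) (fun f m => M.r f m) D →
      WStarCont 𝕜 (fun m => D m) →
      IsInner 𝕜 (fun m f => M.l m f) (fun f m => M.r f m) D

/-!
Evaluate the derivation identity for `D''` at `(m, n)`, where `D'' n` is the canonical image of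
`f ∈ B*`, on `F ∈ B**`. Unwinding the Arens products and using that `D` is a derivation, the term
`D'' m (n · F)` occurs on both sides; cancelling it leaves `⟨F · m, f⟩ = ⟨m, a ↦ ⟨F, f · a⟩⟩`,
which is weak*-continuous in `m`.
-/

@[simp]
theorem tr_apply (T : X →L[𝕜] Y) (φ : Du 𝕜 Y) (x : X) : tr 𝕜 T φ x = φ (T x) := rfl

@[simp]
theorem adj_apply (m : X →L[𝕜] Y →L[𝕜] Z) (φ : Du 𝕜 Z) (x : X) (y : Y) :
    adj 𝕜 m φ x y = φ (m x y) := rfl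

theorem bitr_apply (T : X →L[𝕜] Y) (F : Bi 𝕜 X) (φ : Du 𝕜 Y) :
    bitr 𝕜 T F φ = F (tr 𝕜 T φ) := rfl

theorem ar1_apply (m : X →L[𝕜] Y →L[𝕜] Z) (F : Bi 𝕜 X) (G : Bi 𝕜 Y) (φ : Du 𝕜 Z) :
    ar1 𝕜 m F G φ = F (adj 𝕜 (adj 𝕜 m) G φ) := rfl

theorem wStarCont_of_forall_exists_eval_eq {f : Du 𝕜 X → Du 𝕜 Y}
    (hf : ∀ y : Y, ∃ φ : X, ∀ x, f x y = x φ) : WStarCont 𝕜 f := by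
  refine WeakDual.continuous_of_continuous_eval fun y => ?_
  obtain ⟨φ, hφ⟩ := hf y
  exact (WeakDual.eval_continuous φ).congr fun x => (hφ x).symm

section Derivation

variable {A B : Type} [NonUnitalNormedRing A] [NormedSpace 𝕜 A] [IsScalarTower 𝕜 A A]
  [SMulCommClass 𝕜 A A] [NormedAddCommGroup B] [NormedSpace 𝕜 B]
  {l : A →L[𝕜] B →L[𝕜] B} {r : B →L[𝕜] A →L[𝕜] B} {D : A →L[𝕜] Du 𝕜 B}

theorem adj_mul_tr_of_isDer
    (hD : IsDer 𝕜 (fun a b => a * b) (fun a f => f.comp (r.flip a)) (fun f a => f.comp (l a)) D)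
    (F : Bi 𝕜 B) (a : A) :
    adj 𝕜 (mul 𝕜 A) (tr 𝕜 D F) a =
      tr 𝕜 D (F.comp (tr 𝕜 (r.flip a))) + F.comp (adj 𝕜 l (D a)) := by
  ext b
  simp only [adj_apply, tr_apply, mul_apply', hD a b, add_apply, map_add]
  rfl

theorem bitr_ar1_mul_apply_of_bitr_eq
    (hD : IsDer 𝕜 (fun a b => a * b) (fun a f => f.comp (r.flip a)) (fun f a => f.comp (l a)) D)
    {n : Bi 𝕜 A} {f : Du 𝕜 B} (hn : bitr 𝕜 D n = inDu 𝕜 (Du 𝕜 B) f) (m : Bi 𝕜 A) (F : Bi 𝕜 B) :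
    bitr 𝕜 D (ar1 𝕜 (mul 𝕜 A) m n) F =
      m (F.comp (adj 𝕜 r.flip f)) + bitr 𝕜 D m (ar1 𝕜 l n F) := by
  have hn' : ∀ a, n (tr 𝕜 D (F.comp (tr 𝕜 (r.flip a)))) = F (adj 𝕜 r.flip f a) := fun a =>
    DFunLike.congr_fun hn (F.comp (tr 𝕜 (r.flip a)))
  have hnF : adj 𝕜 (adj 𝕜 (mul 𝕜 A)) n (tr 𝕜 D F) =
      F.comp (adj 𝕜 r.flip f) + tr 𝕜 D (ar1 𝕜 l n F) := by
    ext a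
    simp only [adj_apply, adj_mul_tr_of_isDer 𝕜 hD, map_add, hn']
    rfl
  rw [bitr_apply, ar1_apply, hnF, map_add]
  rfl

theorem ar1_right_apply_eq_of_bitr_eq
    (hD : IsDer 𝕜 (fun a b => a * b) (fun a f => f.comp (r.flip a)) (fun f a => f.comp (l a)) D)
    (hD'' : IsDer 𝕜 (fun m n => ar1 𝕜 (mul 𝕜 A) m n)
      (fun m Φ => Φ.comp ((ar1 𝕜 r).flip m)) (fun Φ m => Φ.comp (ar1 𝕜 l m)) (bitr 𝕜 D))
    {n : Bi 𝕜 A} {f : Du 𝕜 B} (hn : bitr 𝕜 D n = inDu 𝕜 (Du 𝕜 B) f) (F : Bi 𝕜 B) (m : Bi 𝕜 A) :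
    ar1 𝕜 r F m f = m (F.comp (adj 𝕜 r.flip f)) := by
  have h := DFunLike.congr_fun (hD'' m n) F
  simp only [add_apply, ContinuousLinearMap.comp_apply, flip_apply, hn,
    bitr_ar1_mul_apply_of_bitr_eq 𝕜 hD hn] at h
  exact (add_right_cancel h).symm

end Derivation

theorem statement17_general {𝕜 : Type} [RCLike 𝕜] {A : Type}
    [NonUnitalNormedRing A] [NormedSpace 𝕜 A] [IsScalarTower 𝕜 A A]
    [SMulCommClass 𝕜 A A]
    {B : Type} [NormedAddCommGroup B] [NormedSpace 𝕜 B]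
    (M : BimodStr 𝕜 (ContinuousLinearMap.mul 𝕜 A) B)
    -- `D : A → B*` is a continuous derivation
    (D : A →L[𝕜] Du 𝕜 B)
    (hD : IsDer 𝕜 (fun a b => a * b)
      (fun (a : A) (f : Du 𝕜 B) => f.comp (M.r.flip a))
      (fun (f : Du 𝕜 B) (a : A) => f.comp (M.l a)) D)
    -- `D'' : A** → B***` is a derivation
    (hD'' : IsDer 𝕜 (fun m n => ar1 𝕜 (ContinuousLinearMap.mul 𝕜 A) m n)
      (fun (m : Bi 𝕜 A) (F : Du 𝕜 (Bi 𝕜 B)) => F.comp ((ar1 𝕜 M.r).flip m))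
      (fun (F : Du 𝕜 (Bi 𝕜 B)) (m : Bi 𝕜 A) => F.comp (ar1 𝕜 M.l m))
      (bitr 𝕜 D))
    -- `B* ⊆ D''(A**)`
    (hsub : ∀ f : Du 𝕜 B, ∃ m : Bi 𝕜 A, bitr 𝕜 D m = inDu 𝕜 (Du 𝕜 B) f) :
    -- `Z^ℓ_{A**}(B**) = B**`
    ∀ F : Bi 𝕜 B, WStarCont 𝕜 fun m : Bi 𝕜 A => ar1 𝕜 M.r F m := by
  intro F
  refine wStarCont_of_forall_exists_eval_eq 𝕜 fun f => ?_
  obtain ⟨n, hn⟩ := hsub f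
  exact ⟨F.comp (adj 𝕜 M.r.flip f), ar1_right_apply_eq_of_bitr_eq 𝕜 hD hD'' hn F⟩

/-- Let `A` be a Banach algebra, `B` a Banach `A`-bimodule, and `D : A → B*` a continuous
derivation.  If the second transpose `D'' : A** → B***` is a derivation and
`B* ⊆ D''(A**)`, then `Z^ℓ_{A**}(B**) = B**`. -/
theorem statement17 {𝕜 : Type} [RCLike 𝕜] {A : Type}
    [NonUnitalNormedRing A] [NormedSpace 𝕜 A] [IsScalarTower 𝕜 A A]
    [SMulCommClass 𝕜 A A] [CompleteSpace A]
    {B : Type} [NormedAddCommGroup B] [NormedSpace 𝕜 B] [CompleteSpace B]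
    (M : BimodStr 𝕜 (ContinuousLinearMap.mul 𝕜 A) B)
    -- `D : A → B*` is a continuous derivation
    (D : A →L[𝕜] Du 𝕜 B)
    (hD : IsDer 𝕜 (fun a b => a * b)
      (fun (a : A) (f : Du 𝕜 B) => f.comp (M.r.flip a))
      (fun (f : Du 𝕜 B) (a : A) => f.comp (M.l a)) D)
    -- `D'' : A** → B***` is a derivation
    (hD'' : IsDer 𝕜 (fun m n => ar1 𝕜 (ContinuousLinearMap.mul 𝕜 A) m n)
      (fun (m : Bi 𝕜 A) (F : Du 𝕜 (Bi 𝕜 B)) => F.comp ((ar1 𝕜 M.r).flip m))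
      (fun (F : Du 𝕜 (Bi 𝕜 B)) (m : Bi 𝕜 A) => F.comp (ar1 𝕜 M.l m))
      (bitr 𝕜 D))
    -- `B* ⊆ D''(A**)`
    (hsub : ∀ f : Du 𝕜 B, ∃ m : Bi 𝕜 A, bitr 𝕜 D m = inDu 𝕜 (Du 𝕜 B) f) :
    -- `Z^ℓ_{A**}(B**) = B**`
    ∀ F : Bi 𝕜 B, WStarCont 𝕜 fun m : Bi 𝕜 A => ar1 𝕜 M.r F m :=
  statement17_general M D hD hD'' hsub

end ArensPaper
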